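/- arXiv:1411.6301 — 3 statements merged into one kernel-verified Lean document; each statement's English description precedes it below -/
import Mathlib

section
/- Let H be a finite abelian group (written multiplicatively) and let q : ℕ → H → ℝ[x,x⁻¹] be such that each q_{j,g} has nonnegative coefficients and Σ_{g∈H} q_{j,g}(1) = 1 for every j. Assume that for all characters α ≠ β of H the series Σ_j (Σ_{(g,h) : α(g·h⁻¹) ≠ β(g·h⁻¹)} q_{j,g}(1)·q_{j,h}(1)) diverges. Then for all characters α ≠ β of H and every j₀ ≥ 0, the l¹ norms ‖∏_{j=j₀}^{j₀+d} (p_{α,j} · p_{β,j})‖₁ tend to 0 as d → ∞, where p_{α,j} := Σ_{g∈H} α(g⁻¹)·q_{j,g} ∈ ℂ[x,x⁻¹]. -/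
open Finsupp Filter

/-- The coefficients of a real Laurent polynomial, i.e. of an element of the
monoid algebra `ℝ[ℤ]`, as a finitely supported function `ℤ →₀ ℝ`. -/
def lcoeff (p : AddMonoidAlgebra ℝ ℤ) : ℤ →₀ ℝ := p.coeff

/-- The coefficients of a complex Laurent polynomial. -/
def lcoeffC (p : AddMonoidAlgebra ℂ ℤ) : ℤ →₀ ℂ := p.coeff

/-- The `l¹` norm of a complex Laurent polynomial. -/
noncomputable def l1C (p : AddMonoidAlgebra ℂ ℤ) : ℝ := (lcoeffC p).sum fun _ c => ‖c‖

/-- Evaluation of a real Laurent polynomial at `x = 1`. -/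
noncomputable def ev1 (p : AddMonoidAlgebra ℝ ℤ) : ℝ := (lcoeff p).sum fun _ c => c

/-- A real Laurent polynomial viewed as a complex Laurent polynomial. -/
noncomputable def toC (p : AddMonoidAlgebra ℝ ℤ) : AddMonoidAlgebra ℂ ℤ :=
  AddMonoidAlgebra.ofCoeff (Finsupp.mapRange (fun r : ℝ => (r : ℂ)) Complex.ofReal_zero (lcoeff p))

/-!
With `p_α = ∑_g α(g⁻¹) q_{j,g}`, symmetrising gives
`2 p_α p_β = ∑_{g,h} (α(g⁻¹) β(h⁻¹) + α(h⁻¹) β(g⁻¹)) q_{j,g} q_{j,h}`, and the coefficient has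
modulus `|α(k) + β(k)|` with `k = g h⁻¹`. The character values are roots of unity, so by strict
convexity of `ℂ` and finiteness of `H` there is `c < 1` with `|α(k) + β(k)| ≤ 2c` whenever
`α(k) ≠ β(k)`. Hence `‖p_α p_β‖₁ ≤ 1 - (1 - c) S_j ≤ exp (-(1 - c) S_j)`, where `S_j` is the
`j`-th term of the divergent series, and submultiplicativity of `‖·‖₁` bounds the products by
`exp (-(1 - c) ∑_j S_j) → 0`.
-/

namespace AddMonoidAlgebra

section SeminormedRing

variable {k G : Type*} [SeminormedRing k]

noncomputable def l1Norm (p : AddMonoidAlgebra k G) : ℝ := p.coeff.sum fun _ c => ‖c‖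

theorem l1Norm_eq_sum_of_support_subset (p : AddMonoidAlgebra k G) {s : Finset G}
    (hs : p.coeff.support ⊆ s) : l1Norm p = ∑ a ∈ s, ‖p.coeff a‖ :=
  Finsupp.sum_of_support_subset _ hs _ fun _ _ => norm_zero

theorem l1Norm_nonneg (p : AddMonoidAlgebra k G) : 0 ≤ l1Norm p :=
  Finset.sum_nonneg fun _ _ => norm_nonneg _

theorem l1Norm_single (a : G) (c : k) : l1Norm (single a c) = ‖c‖ :=
  Finsupp.sum_single_index norm_zero

theorem l1Norm_add_le (p q : AddMonoidAlgebra k G) : l1Norm (p + q) ≤ l1Norm p + l1Norm q := by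
  classical
  rw [l1Norm_eq_sum_of_support_subset (p + q) Finsupp.support_add,
    l1Norm_eq_sum_of_support_subset p Finset.subset_union_left,
    l1Norm_eq_sum_of_support_subset q Finset.subset_union_right, ← Finset.sum_add_distrib]
  exact Finset.sum_le_sum fun _ _ => norm_add_le _ _

theorem l1Norm_smul_le (c : k) (p : AddMonoidAlgebra k G) : l1Norm (c • p) ≤ ‖c‖ * l1Norm p := by
  rw [l1Norm_eq_sum_of_support_subset (c • p) Finsupp.support_smul, l1Norm, Finsupp.sum,
    Finset.mul_sum]
  exact Finset.sum_le_sum fun _ _ => norm_mul_le _ _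

theorem l1Norm_sum_le {ι : Type*} (s : Finset ι) (f : ι → AddMonoidAlgebra k G) :
    l1Norm (∑ i ∈ s, f i) ≤ ∑ i ∈ s, l1Norm (f i) := by
  classical
  induction s using Finset.induction with
  | empty => simp [l1Norm]
  | insert i s hi ih =>
    rw [Finset.sum_insert hi, Finset.sum_insert hi]
    exact (l1Norm_add_le _ _).trans (by gcongr)

theorem l1Norm_sum_smul_le {ι : Type*} (s : Finset ι) (c : ι → k)
    (p : ι → AddMonoidAlgebra k G) :
    l1Norm (∑ i ∈ s, c i • p i) ≤ ∑ i ∈ s, ‖c i‖ * l1Norm (p i) :=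
  (l1Norm_sum_le _ _).trans (Finset.sum_le_sum fun _ _ => l1Norm_smul_le _ _)

theorem l1Norm_mul_le [Add G] (p q : AddMonoidAlgebra k G) :
    l1Norm (p * q) ≤ l1Norm p * l1Norm q := by
  calc l1Norm (p * q)
      = l1Norm (∑ a ∈ p.coeff.support, ∑ b ∈ q.coeff.support,
          single (a + b) (p.coeff a * q.coeff b)) := by rw [mul_def]; rfl
    _ ≤ ∑ a ∈ p.coeff.support, ∑ b ∈ q.coeff.support, ‖p.coeff a * q.coeff b‖ := by
      refine (l1Norm_sum_le _ _).trans (Finset.sum_le_sum fun a _ => ?_)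
      refine (l1Norm_sum_le _ _).trans_eq (Finset.sum_congr rfl fun b _ => ?_)
      exact l1Norm_single _ _
    _ ≤ ∑ a ∈ p.coeff.support, ∑ b ∈ q.coeff.support, ‖p.coeff a‖ * ‖q.coeff b‖ := by
      gcongr; exact norm_mul_le _ _
    _ = l1Norm p * l1Norm q := Finset.sum_mul_sum _ _ _ _ |>.symm

end SeminormedRing

theorem l1Norm_prod_le {k G ι : Type*} [SeminormedCommRing k] [NormOneClass k] [AddCommMonoid G]
    (s : Finset ι) (f : ι → AddMonoidAlgebra k G) :
    l1Norm (∏ i ∈ s, f i) ≤ ∏ i ∈ s, l1Norm (f i) := by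
  classical
  induction s using Finset.induction with
  | empty => simp [one_def, l1Norm_single]
  | insert i s hi ih =>
    rw [Finset.prod_insert hi, Finset.prod_insert hi]
    exact (l1Norm_mul_le _ _).trans (mul_le_mul_of_nonneg_left ih (l1Norm_nonneg _))

end AddMonoidAlgebra

open AddMonoidAlgebra
open scoped Topology

theorem ev1_nonneg {p : AddMonoidAlgebra ℝ ℤ} (hp : ∀ m, 0 ≤ lcoeff p m) : 0 ≤ ev1 p :=
  Finset.sum_nonneg fun m _ => hp m

theorem l1Norm_toC {p : AddMonoidAlgebra ℝ ℤ} (hp : ∀ m, 0 ≤ lcoeff p m) :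
    l1Norm (toC p) = ev1 p := by
  rw [l1Norm, toC, Finsupp.sum_mapRange_index fun _ => norm_zero, ev1]
  exact Finsupp.sum_congr fun m _ => by rw [Complex.norm_real, Real.norm_of_nonneg (hp m)]

theorem sum_smul_mul_sum_smul_add_self {ι R A : Type*} [CommSemiring R] [CommSemiring A]
    [Algebra R A] (s : Finset ι) (a b : ι → R) (x : ι → A) :
    (∑ i ∈ s, a i • x i) * (∑ i ∈ s, b i • x i) + (∑ i ∈ s, a i • x i) * (∑ i ∈ s, b i • x i)
      = ∑ i ∈ s, ∑ j ∈ s, (a i * b j + a j * b i) • (x i * x j) := by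
  have h : (∑ i ∈ s, a i • x i) * (∑ i ∈ s, b i • x i)
      = ∑ i ∈ s, ∑ j ∈ s, (a i * b j) • (x i * x j) := by
    simp_rw [Finset.sum_mul_sum, smul_mul_smul_comm]
  calc _ = ∑ i ∈ s, ∑ j ∈ s, (a i * b j) • (x i * x j)
        + ∑ i ∈ s, ∑ j ∈ s, (a j * b i) • (x i * x j) := by
        rw [h, Finset.sum_comm (f := fun i j => (a j * b i) • (x i * x j))]
        simp_rw [mul_comm (x _) (x _)]
    _ = _ := by simp_rw [← Finset.sum_add_distrib, add_smul]

theorem tendsto_sum_Icc_atTop_of_not_summable {f : ℕ → ℝ} (hf : ∀ n, 0 ≤ f n)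
    (hs : ¬Summable f) (m : ℕ) :
    Tendsto (fun d => ∑ j ∈ Finset.Icc m (m + d), f j) atTop atTop := by
  have hpartial := ((not_summable_iff_tendsto_nat_atTop_of_nonneg hf).1 hs).comp
    (tendsto_add_atTop_nat (m + 1))
  have hIcc : ∀ d, ∑ j ∈ Finset.Icc m (m + d), f j
      = ∑ j ∈ Finset.range (d + (m + 1)), f j + -∑ j ∈ Finset.range m, f j := fun d => by
    rw [← Finset.Ico_add_one_right_eq_Icc, Finset.sum_Ico_eq_sub _ (by omega), sub_eq_add_neg]
    ring_nf
  simp_rw [hIcc]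
  exact tendsto_atTop_add_const_right _ _ hpartial

theorem MonoidHom.norm_apply_eq_one_of_finite {H : Type*} [Group H] [Finite H] (α : H →* ℂ)
    (g : H) : ‖α g‖ = 1 :=
  (α.isOfFinOrder (isOfFinOrder_of_finite g)).norm_eq_one

section Characters

variable {H : Type*} [Group H]

theorem exists_lt_one_forall_norm_add_le [Finite H] (α β : H →* ℂ) :
    ∃ c < 1, ∀ k, α k ≠ β k → ‖α k + β k‖ ≤ 2 * c := by
  have hlt : ∀ k, α k ≠ β k → ‖α k + β k‖ / 2 < 1 := fun k hk => by
    have hnorm : ‖α k‖ = ‖β k‖ := by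
      rw [α.norm_apply_eq_one_of_finite, β.norm_apply_eq_one_of_finite]
    have := not_sameRay_iff_norm_add_lt.1 ((not_sameRay_iff_of_norm_eq hnorm).2 hk)
    rw [α.norm_apply_eq_one_of_finite, β.norm_apply_eq_one_of_finite] at this
    linarith
  have hev : ∀ᶠ c in 𝓝[<] (1 : ℝ), ∀ k, α k ≠ β k → ‖α k + β k‖ / 2 < c :=
    eventually_all.2 fun k => eventually_imp_distrib_left.2 fun hk =>
      nhdsWithin_le_nhds (eventually_gt_nhds (hlt k hk))
  obtain ⟨c, hc, hc1⟩ := (hev.and self_mem_nhdsWithin).exists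
  exact ⟨c, hc1, fun k hk => by linarith [hc k hk]⟩

variable [Fintype H]

noncomputable def eigenvaluePoly (α : H →* ℂ) (Q : H → AddMonoidAlgebra ℝ ℤ) :
    AddMonoidAlgebra ℂ ℤ :=
  ∑ g, α g⁻¹ • toC (Q g)

noncomputable def disagreementWeight (α β : H →* ℂ) (Q : H → AddMonoidAlgebra ℝ ℤ) : ℝ :=
  ∑ g, ∑ h, if α (g * h⁻¹) ≠ β (g * h⁻¹) then ev1 (Q g) * ev1 (Q h) else 0

theorem disagreementWeight_nonneg (α β : H →* ℂ) {Q : H → AddMonoidAlgebra ℝ ℤ}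
    (hQ : ∀ g m, 0 ≤ lcoeff (Q g) m) : 0 ≤ disagreementWeight α β Q :=
  Finset.sum_nonneg fun g _ => Finset.sum_nonneg fun h _ => by
    split_ifs
    · exact mul_nonneg (ev1_nonneg (hQ g)) (ev1_nonneg (hQ h))
    · exact le_rfl

theorem l1Norm_eigenvaluePoly_mul_le (α β : H →* ℂ) {Q : H → AddMonoidAlgebra ℝ ℤ}
    (hQ : ∀ g m, 0 ≤ lcoeff (Q g) m) :
    l1Norm (eigenvaluePoly α Q * eigenvaluePoly β Q)
      ≤ ∑ g, ∑ h, ‖α (g * h⁻¹) + β (g * h⁻¹)‖ / 2 * (ev1 (Q g) * ev1 (Q h)) := by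
  set P := eigenvaluePoly α Q * eigenvaluePoly β Q
  have hsym : P + P = ∑ g, ∑ h, (α g⁻¹ * β h⁻¹ + α h⁻¹ * β g⁻¹) • (toC (Q g) * toC (Q h)) :=
    sum_smul_mul_sum_smul_add_self _ _ _ _
  have hcoef : ∀ g h : H,
      ‖α g⁻¹ * β h⁻¹ + α h⁻¹ * β g⁻¹‖ = ‖α (g * h⁻¹) + β (g * h⁻¹)‖ := fun g h => by
    have hα : α h⁻¹ = α g⁻¹ * α (g * h⁻¹) := by rw [← map_mul, inv_mul_cancel_left]
    have hβ : β h⁻¹ = β g⁻¹ * β (g * h⁻¹) := by rw [← map_mul, inv_mul_cancel_left]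
    rw [hα, hβ, show α g⁻¹ * (β g⁻¹ * β (g * h⁻¹)) + α g⁻¹ * α (g * h⁻¹) * β g⁻¹
        = α g⁻¹ * β g⁻¹ * (α (g * h⁻¹) + β (g * h⁻¹)) by ring, norm_mul, norm_mul,
      α.norm_apply_eq_one_of_finite, β.norm_apply_eq_one_of_finite, one_mul, one_mul]
  calc l1Norm P = l1Norm ((2 : ℂ)⁻¹ • (P + P)) := by
        rw [← two_smul ℂ P, smul_smul, inv_mul_cancel₀ two_ne_zero, one_smul]
    _ ≤ 2⁻¹ * l1Norm (P + P) := by simpa using l1Norm_smul_le (2 : ℂ)⁻¹ (P + P)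
    _ ≤ 2⁻¹ * ∑ g, ∑ h, ‖α (g * h⁻¹) + β (g * h⁻¹)‖ * (ev1 (Q g) * ev1 (Q h)) := by
        rw [hsym]
        gcongr
        refine (l1Norm_sum_le _ _).trans (Finset.sum_le_sum fun g _ => ?_)
        refine (l1Norm_sum_smul_le _ _ _).trans (Finset.sum_le_sum fun h _ => ?_)
        rw [hcoef, ← l1Norm_toC (hQ g), ← l1Norm_toC (hQ h)]
        gcongr
        exact l1Norm_mul_le _ _
    _ = _ := by
        simp only [Finset.mul_sum]
        exact Finset.sum_congr rfl fun g _ => Finset.sum_congr rfl fun h _ => by ring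

theorem l1Norm_eigenvaluePoly_mul_le_one_sub {α β : H →* ℂ}
    {Q : H → AddMonoidAlgebra ℝ ℤ} (hQ : ∀ g m, 0 ≤ lcoeff (Q g) m) (hQ1 : ∑ g, ev1 (Q g) = 1)
    {c : ℝ} (hc : ∀ k, α k ≠ β k → ‖α k + β k‖ ≤ 2 * c) :
    l1Norm (eigenvaluePoly α Q * eigenvaluePoly β Q) ≤ 1 - (1 - c) * disagreementWeight α β Q := by
  have hterm : ∀ g h : H, ‖α (g * h⁻¹) + β (g * h⁻¹)‖ / 2 * (ev1 (Q g) * ev1 (Q h))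
      ≤ ev1 (Q g) * ev1 (Q h)
        - (1 - c) * if α (g * h⁻¹) ≠ β (g * h⁻¹) then ev1 (Q g) * ev1 (Q h) else 0 := by
    intro g h
    have hw : 0 ≤ ev1 (Q g) * ev1 (Q h) := mul_nonneg (ev1_nonneg (hQ g)) (ev1_nonneg (hQ h))
    split_ifs with hk
    · nlinarith [hc _ hk]
    · have : ‖α (g * h⁻¹) + β (g * h⁻¹)‖ ≤ 2 := (norm_add_le _ _).trans_eq (by
        rw [α.norm_apply_eq_one_of_finite, β.norm_apply_eq_one_of_finite]; norm_num)
      nlinarith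
  refine (l1Norm_eigenvaluePoly_mul_le α β hQ).trans
    ((Finset.sum_le_sum fun g _ => Finset.sum_le_sum fun h _ => hterm g h).trans_eq ?_)
  rw [disagreementWeight, Finset.mul_sum]
  simp_rw [Finset.sum_sub_distrib, Finset.mul_sum]
  rw [← Finset.sum_mul_sum, hQ1, one_mul]

end Characters

open scoped Classical in
/-- Lemma 1.2: for an ergodic sequence of hemicirculant matrices (here encoded by their
coefficient families `q j : H → ℝ[x,x⁻¹]`), for unequal characters `α ≠ β` the `l¹` norms
of products `∏_{j=j₀}^{j₀+d} p_{α,j} p_{β,j}` of eigenvalue polynomials tend to `0`. -/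
theorem ergodic_eigenvalue_products_tendsto_zero {H : Type} [CommGroup H] [Fintype H]
    (q : ℕ → H → AddMonoidAlgebra ℝ ℤ)
    (hpos : ∀ j g m, 0 ≤ lcoeff (q j g) m)
    (hsum : ∀ j, ∑ g, ev1 (q j g) = 1)
    (herg : ∀ α β : H →* ℂ, α ≠ β →
      ¬ Summable (fun j => ∑ g, ∑ h,
        if α (g * h⁻¹) ≠ β (g * h⁻¹) then ev1 (q j g) * ev1 (q j h) else 0)) :
    ∀ α β : H →* ℂ, α ≠ β → ∀ j₀ : ℕ,
      Tendsto
        (fun d => l1C (∏ j ∈ Finset.Icc j₀ (j₀ + d),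
          ((∑ g, α g⁻¹ • toC (q j g)) * (∑ g, β g⁻¹ • toC (q j g)))))
        atTop (nhds 0) := by
  intro α β hαβ j₀
  obtain ⟨c, hc1, hc⟩ := exists_lt_one_forall_norm_add_le α β
  have hweight : Tendsto (fun d => ∑ j ∈ Finset.Icc j₀ (j₀ + d), disagreementWeight α β (q j))
      atTop atTop :=
    tendsto_sum_Icc_atTop_of_not_summable (fun j => disagreementWeight_nonneg α β (hpos j))
      (herg α β hαβ) j₀
  refine squeeze_zero (fun d => l1Norm_nonneg _) (fun d => ?_) (Real.tendsto_exp_atBot.comp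
    (tendsto_neg_atTop_atBot.comp (hweight.const_mul_atTop (sub_pos.2 hc1))))
  calc l1Norm (∏ j ∈ Finset.Icc j₀ (j₀ + d), eigenvaluePoly α (q j) * eigenvaluePoly β (q j))
      ≤ ∏ j ∈ Finset.Icc j₀ (j₀ + d), l1Norm (eigenvaluePoly α (q j) * eigenvaluePoly β (q j)) :=
        l1Norm_prod_le _ _
    _ ≤ ∏ j ∈ Finset.Icc j₀ (j₀ + d), Real.exp (-((1 - c) * disagreementWeight α β (q j))) :=
        Finset.prod_le_prod (fun _ _ => l1Norm_nonneg _) fun j _ =>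
          (l1Norm_eigenvaluePoly_mul_le_one_sub (hpos j) (hsum j) hc).trans
            (by linarith [Real.add_one_le_exp (-((1 - c) * disagreementWeight α β (q j)))])
    _ = Real.exp (-((1 - c) * ∑ j ∈ Finset.Icc j₀ (j₀ + d), disagreementWeight α β (q j))) := by
        rw [← Real.exp_sum, Finset.mul_sum, ← Finset.sum_neg_distrib]
end

section
/- Fix an integer n ≥ 1, let ζ := exp(2πi/n) ∈ ℂ, and let q : ℤ/nℤ → ℂ[x,x⁻¹] be any family of Laurent polynomials. Let M be the associated circulant matrix, M_{g,h} := q_{g−h}, and for k ∈ ℤ/nℤ let p_k := Σ_{g∈ℤ/nℤ} ζ^{(k·g)}·q_g be the eigenvalue polynomials. Then for every column index h ∈ ℤ/nℤ: Σ_{g∈ℤ/nℤ} ‖(M·M)_{g,h} − n·(q_g · q_{−h})‖₁ ≤ Σ_{(k,l) ∈ (ℤ/nℤ)², k ≠ l} ‖p_k · p_l‖₁. -/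
/-!
Write `ψ = ZMod.stdAddChar` and `Q = 𝓕 q` for the discrete Fourier transform of `q`; the
eigenvalue polynomials are `p_k = Q (-k)`. Fourier inversion `n q_a = ∑_k ψ(ka) Q_k` diagonalises
the circulant matrix `M`: `n (M²)_{gh} = ∑_k ψ(k(g - h)) Q_k²`, while
`n² q_g q_{-h} = ∑_{k,l} ψ(kg - lh) Q_k Q_l`. Hence `n (M²_{gh} - n q_g q_{-h})` is minus the
off-diagonal part of the latter sum. Its coefficients are unimodular, so every entry of a column has
`l¹` norm at most `n⁻¹ ∑_{k ≠ l} ‖Q_k Q_l‖₁`, and the `n` entries together at most the sum itself.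
-/

open Finsupp

open Finset ZMod Matrix

lemma l1C_eq_sum_of_support_subset (p : AddMonoidAlgebra ℂ ℤ) {s : Finset ℤ}
    (hs : (lcoeffC p).support ⊆ s) : l1C p = ∑ a ∈ s, ‖lcoeffC p a‖ :=
  Finsupp.sum_of_support_subset _ hs _ fun _ _ => norm_zero

lemma l1C_add_le (p r : AddMonoidAlgebra ℂ ℤ) : l1C (p + r) ≤ l1C p + l1C r := by
  classical
  let s := (lcoeffC (p + r)).support ∪ (lcoeffC p).support ∪ (lcoeffC r).support
  rw [l1C_eq_sum_of_support_subset (p + r) (s := s) (by intro; simp +contextual [s]),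
    l1C_eq_sum_of_support_subset p (s := s) (by intro; simp +contextual [s]),
    l1C_eq_sum_of_support_subset r (s := s) (by intro; simp +contextual [s]),
    ← Finset.sum_add_distrib]
  exact Finset.sum_le_sum fun a _ => norm_add_le (lcoeffC p a) (lcoeffC r a)

lemma l1C_smul (c : ℂ) (p : AddMonoidAlgebra ℂ ℤ) : l1C (c • p) = ‖c‖ * l1C p := by
  rw [l1C, l1C, lcoeffC, AddMonoidAlgebra.coeff_smul, Finsupp.sum_smul_index' fun _ => norm_zero,
    Finsupp.mul_sum]
  simp only [norm_smul]
  rfl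

noncomputable def l1Seminorm : Seminorm ℂ (AddMonoidAlgebra ℂ ℤ) :=
  Seminorm.of l1C l1C_add_le l1C_smul

lemma coe_l1Seminorm : ⇑l1Seminorm = l1C := rfl

lemma Fintype.sum_sum_eq_sum_diag_add_sum_sum_ite_ne {ι M : Type*} [Fintype ι] [DecidableEq ι]
    [AddCommMonoid M] (f : ι → ι → M) :
    ∑ k, ∑ l, f k l = ∑ k, f k k + ∑ k, ∑ l, if k ≠ l then f k l else 0 := by
  rw [← Finset.sum_add_distrib]
  refine Finset.sum_congr rfl fun k _ => ?_
  rw [← Fintype.sum_ite_eq k (f k), ← Finset.sum_add_distrib]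
  refine Finset.sum_congr rfl fun l _ => ?_
  by_cases hkl : k = l <;> simp [hkl]

namespace ZMod

variable {N : ℕ} [NeZero N]

lemma exp_two_pi_I_div_pow_val (j : ZMod N) :
    Complex.exp (2 * Real.pi * Complex.I / N) ^ j.val = stdAddChar j := by
  rw [stdAddChar_apply, toCircle_apply, ← Complex.exp_nat_mul]
  ring_nf

lemma sum_stdAddChar_mul (b : ZMod N) :
    ∑ s, stdAddChar (s * b) = if b = 0 then (N : ℂ) else 0 := by
  rw [AddChar.sum_mulShift b (isPrimitive_stdAddChar N), ZMod.card]
  split_ifs <;> simp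

section Module

variable {E : Type*} [AddCommGroup E] [Module ℂ E]

lemma sum_exp_pow_val_smul_eq_dft_neg (q : ZMod N → E) (k : ZMod N) :
    ∑ g, Complex.exp (2 * Real.pi * Complex.I / N) ^ (k * g).val • q g = 𝓕 q (-k) := by
  simp only [exp_two_pi_I_div_pow_val, dft_apply, mul_neg, neg_neg, mul_comm k]

lemma sum_stdAddChar_mul_smul_dft (q : ZMod N → E) (a : ZMod N) :
    ∑ k, stdAddChar (k * a) • 𝓕 q k = (N : ℂ) • q a := by
  have h := invDFT_apply (𝓕 q) a
  rw [LinearEquiv.symm_apply_apply] at h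
  rw [h, smul_smul, mul_inv_cancel₀ (NeZero.ne _), one_smul]

end Module

variable {A : Type*} [Ring A] [Algebra ℂ A]

lemma smul_circulant_mul_self_apply (q : ZMod N → A) (g h : ZMod N) :
    (N : ℂ) • (circulant q * circulant q) g h =
      ∑ k, stdAddChar (k * (g - h)) • (𝓕 q k * 𝓕 q k) := by
  have expand : ∀ k, stdAddChar (k * (g - h)) • (𝓕 q k * 𝓕 q k) =
      ∑ a, ∑ b, stdAddChar (k * (g - h - a - b)) • (q a * q b) := by
    intro k
    simp only [dft_apply, Finset.sum_mul_sum, Finset.smul_sum, smul_mul_smul_comm, smul_smul,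
      ← AddChar.map_add_eq_mul]
    refine Finset.sum_congr rfl fun a _ => Finset.sum_congr rfl fun b _ => ?_
    ring_nf
  have collapse : ∀ a, ∑ b, ∑ k : ZMod N, stdAddChar (k * (g - h - a - b)) • (q a * q b) =
      (N : ℂ) • (q a * q (g - h - a)) := by
    intro a
    simp only [← Finset.sum_smul, sum_stdAddChar_mul, sub_eq_zero, ite_smul, zero_smul]
    exact Fintype.sum_ite_eq _ _
  rw [Finset.sum_congr rfl fun k _ => expand k, Finset.sum_comm,
    Finset.sum_congr rfl fun a _ => Finset.sum_comm.trans (collapse a), ← Finset.smul_sum,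
    Matrix.mul_apply]
  congr 1
  exact Fintype.sum_equiv (Equiv.subLeft g) _ _ fun s => by simp

lemma smul_mul_eq_sum_sum_dft_mul_dft (q : ZMod N → A) (g h : ZMod N) :
    ((N : ℂ) * N) • (q g * q (-h)) =
      ∑ k, ∑ l, (stdAddChar (k * g) * stdAddChar (-(l * h))) • (𝓕 q k * 𝓕 q l) := by
  rw [← smul_mul_smul_comm, ← sum_stdAddChar_mul_smul_dft q g,
    ← sum_stdAddChar_mul_smul_dft q (-h), Finset.sum_mul_sum]
  simp only [smul_mul_smul_comm, mul_neg]

lemma smul_circulant_mul_self_apply_sub_eq (q : ZMod N → A) (g h : ZMod N) :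
    (N : ℂ) • ((circulant q * circulant q) g h - (N : ℂ) • (q g * q (-h))) =
      -∑ k, ∑ l, if k ≠ l then
        (stdAddChar (k * g) * stdAddChar (-(l * h))) • (𝓕 q k * 𝓕 q l) else 0 := by
  set X : ZMod N → ZMod N → A := fun k l =>
    (stdAddChar (k * g) * stdAddChar (-(l * h))) • (𝓕 q k * 𝓕 q l)
  have diag : ∀ k, X k k = stdAddChar (k * (g - h)) • (𝓕 q k * 𝓕 q k) := fun k => by
    simp only [X, ← AddChar.map_add_eq_mul, sub_eq_add_neg, mul_add, mul_neg]
  rw [smul_sub, smul_smul, smul_circulant_mul_self_apply, smul_mul_eq_sum_sum_dft_mul_dft,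
    Fintype.sum_sum_eq_sum_diag_add_sum_sum_ite_ne X, ← Finset.sum_congr rfl fun k _ => diag k]
  abel

lemma natCast_mul_seminorm_circulant_mul_self_apply_sub_le (ν : Seminorm ℂ A)
    (q : ZMod N → A) (g h : ZMod N) :
    (N : ℝ) * ν ((circulant q * circulant q) g h - (N : ℂ) • (q g * q (-h))) ≤
      ∑ k, ∑ l, if k ≠ l then ν (𝓕 q k * 𝓕 q l) else 0 := by
  rw [← Complex.norm_natCast, ← map_smul_eq_mul, smul_circulant_mul_self_apply_sub_eq,
    map_neg_eq_map]
  have subadd : ∀ (s : Finset (ZMod N)) (f : ZMod N → A), ν (∑ i ∈ s, f i) ≤ ∑ i ∈ s, ν (f i) :=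
    Finset.le_sum_of_subadditive ν (map_zero ν).le (map_add_le_add ν)
  refine (subadd _ _).trans <| Finset.sum_le_sum fun k _ =>
    (subadd _ _).trans <| Finset.sum_le_sum fun l _ => ?_
  split_ifs
  · rw [map_smul_eq_mul, norm_mul, AddChar.norm_apply, AddChar.norm_apply, one_mul, one_mul]
  · exact (map_zero ν).le

lemma sum_seminorm_circulant_mul_self_apply_sub_le (ν : Seminorm ℂ A) (q : ZMod N → A)
    (h : ZMod N) :
    ∑ g, ν ((circulant q * circulant q) g h - (N : ℂ) • (q g * q (-h))) ≤
      ∑ k, ∑ l, if k ≠ l then ν (𝓕 q k * 𝓕 q l) else 0 := by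
  have hN : (0 : ℝ) < N := by exact_mod_cast Nat.pos_of_ne_zero (NeZero.ne N)
  refine le_of_mul_le_mul_left ?_ hN
  calc (N : ℝ) * ∑ g, ν ((circulant q * circulant q) g h - (N : ℂ) • (q g * q (-h)))
      = ∑ g, (N : ℝ) * ν ((circulant q * circulant q) g h - (N : ℂ) • (q g * q (-h))) :=
        Finset.mul_sum _ _ _
    _ ≤ ∑ _g : ZMod N, ∑ k, ∑ l, if k ≠ l then ν (𝓕 q k * 𝓕 q l) else 0 :=
      Finset.sum_le_sum fun g _ => natCast_mul_seminorm_circulant_mul_self_apply_sub_le ν q g h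
    _ = _ := by rw [sum_const, card_univ, ZMod.card, nsmul_eq_mul]

end ZMod

open scoped Classical in
/-- The approximate rank-one factorization of `M²` at the heart of Theorem 1.3, for a
circulant matrix `M` with Laurent-polynomial entries `M_{g,h} = q_{g−h}` over `ℤ/nℤ`:
columnwise, `M² − n·(q_g q_{−h})` is bounded in `l¹` by `∑_{k ≠ l} ‖p_k p_l‖₁`, where
`p_k = ∑_g ζ^{kg} q_g` are the eigenvalue polynomials and `ζ = exp(2πi/n)`. -/
theorem circulant_square_approx_rank_one (n : ℕ) [NeZero n]
    (q : ZMod n → AddMonoidAlgebra ℂ ℤ) :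
    ∀ h : ZMod n,
      ∑ g : ZMod n,
        l1C ((Matrix.of (fun g' h' : ZMod n => q (g' - h')) *
              Matrix.of (fun g' h' : ZMod n => q (g' - h'))) g h
             - (n : ℂ) • (q g * q (-h)))
        ≤ ∑ k : ZMod n, ∑ l : ZMod n,
            if k ≠ l then
              l1C ((∑ g : ZMod n,
                      (Complex.exp (2 * Real.pi * Complex.I / n)) ^ ((k * g).val) • q g) *
                   (∑ g : ZMod n,
                      (Complex.exp (2 * Real.pi * Complex.I / n)) ^ ((l * g).val) • q g))
            else 0 := by
  intro h
  simp only [sum_exp_pow_val_smul_eq_dft_neg]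
  calc _ ≤ ∑ k, ∑ l, if k ≠ l then l1Seminorm (𝓕 q k * 𝓕 q l) else 0 :=
        sum_seminorm_circulant_mul_self_apply_sub_le l1Seminorm q h
    _ = _ := by
      rw [← Equiv.sum_comp (Equiv.neg _)]
      refine Finset.sum_congr rfl fun k _ => ?_
      rw [← Equiv.sum_comp (Equiv.neg _)]
      simp [coe_l1Seminorm]
end

section
/- Let a be a positive integer, let b : I → ℕ and c : J → ℕ be finite families of positive integers with J nonempty of odd cardinality, and suppose a + Σ_{i∈I} b_i = Σ_{j∈J} c_j. Then ‖(1 + x^a) · ∏_{i∈I}(1 + x^{b_i}) · ∏_{j∈J}(1 − x^{c_j})‖₁ ≤ 2^{1 + |I| + |J|} − 2. -/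
/-! Expanding `∏ (1 ± x^{e_k})` writes the polynomial as a sum of `2^n` signed monomials, one for
each subset of the factors, so its `l¹` norm is at most `2^n`. Taking the factor `1 + x^a`, the
`1 + x^{b_i}` and the `1 - x^{c_j}` together, the relation `a + ∑ b_i = ∑ c_j` makes the monomial of
the subset `{a} ∪ I` equal to `x^{∑ c_j}`, while the subset `J` gives `(-1)^{|J|} x^{∑ c_j}`; for
`|J|` odd these two cancel, and the triangle inequality over the remaining `2^n - 2` monomials gives
the bound. -/

open Polynomial

/-- The `l¹` norm of a real polynomial: the sum of the absolute values of its
coefficients. -/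
noncomputable def pl1 (p : Polynomial ℝ) : ℝ := ∑ m ∈ p.support, |p.coeff m|

lemma pl1_eq_sum_of_support_subset (p : ℝ[X]) {s : Finset ℕ} (h : p.support ⊆ s) :
    pl1 p = ∑ m ∈ s, |p.coeff m| :=
  Finset.sum_subset h fun m _ hm => by simp [notMem_support_iff.mp hm]

lemma pl1_zero : pl1 0 = 0 := by
  simp [pl1]

lemma pl1_add_le (p q : ℝ[X]) : pl1 (p + q) ≤ pl1 p + pl1 q := by
  rw [pl1_eq_sum_of_support_subset (p + q) support_add,
    pl1_eq_sum_of_support_subset p Finset.subset_union_left,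
    pl1_eq_sum_of_support_subset q Finset.subset_union_right, ← Finset.sum_add_distrib]
  exact Finset.sum_le_sum fun m _ => by simpa using abs_add_le (p.coeff m) (q.coeff m)

lemma pl1_sum_le {κ : Type*} (S : Finset κ) (f : κ → ℝ[X]) :
    pl1 (∑ k ∈ S, f k) ≤ ∑ k ∈ S, pl1 (f k) :=
  Finset.le_sum_of_subadditive pl1 pl1_zero.le pl1_add_le S f

lemma pl1_monomial (n : ℕ) (r : ℝ) : pl1 (monomial n r) = |r| := by
  rw [pl1_eq_sum_of_support_subset _ (support_monomial_subset n r)]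
  simp

lemma prod_one_add_monomial {ι : Type*} (s : Finset ι) (e : ι → ℕ) (r : ι → ℝ) :
    ∏ i ∈ s, (1 + monomial (e i) (r i)) =
      ∑ t ∈ s.powerset, monomial (∑ i ∈ t, e i) (∏ i ∈ t, r i) := by
  simp only [← C_mul_X_pow_eq_monomial, Finset.prod_one_add, Finset.prod_mul_distrib, map_prod,
    Finset.prod_pow_eq_pow_sum]

lemma pl1_sum_le_card_sub_two_of_add_eq_zero {κ : Type*} [DecidableEq κ] (S : Finset κ)
    (f : κ → ℝ[X]) (hf : ∀ k ∈ S, pl1 (f k) ≤ 1) {t u : κ} (ht : t ∈ S) (hu : u ∈ S)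
    (htu : t ≠ u) (hcancel : f t + f u = 0) :
    pl1 (∑ k ∈ S, f k) ≤ S.card - 2 := by
  have hu' : u ∈ S.erase t := Finset.mem_erase.mpr ⟨htu.symm, hu⟩
  have hsum : ∑ k ∈ S, f k = ∑ k ∈ (S.erase t).erase u, f k := by
    rw [← Finset.add_sum_erase S f ht, ← Finset.add_sum_erase _ f hu', ← add_assoc, hcancel,
      zero_add]
  have hcard : (((S.erase t).erase u).card : ℝ) = S.card - 2 := by
    have h1 := Finset.card_erase_add_one ht
    have h2 := Finset.card_erase_add_one hu'
    rw [← h1, ← h2]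
    push_cast
    ring
  calc pl1 (∑ k ∈ S, f k) ≤ ∑ k ∈ (S.erase t).erase u, pl1 (f k) := hsum ▸ pl1_sum_le _ f
    _ ≤ ((S.erase t).erase u).card • (1 : ℝ) := Finset.sum_le_card_nsmul _ _ _ fun k hk =>
        hf k (Finset.mem_of_mem_erase (Finset.mem_of_mem_erase hk))
    _ = S.card - 2 := by rw [nsmul_one, hcard]

lemma pl1_prod_one_add_monomial_le_of_cancel {ι : Type*} (s : Finset ι) (e : ι → ℕ) (r : ι → ℝ)
    (hr : ∀ i ∈ s, |r i| ≤ 1) {t u : Finset ι} (ht : t ⊆ s) (hu : u ⊆ s) (htu : t ≠ u)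
    (he : ∑ i ∈ t, e i = ∑ i ∈ u, e i) (hsign : ∏ i ∈ t, r i = -∏ i ∈ u, r i) :
    pl1 (∏ i ∈ s, (1 + monomial (e i) (r i))) ≤ 2 ^ s.card - 2 := by
  classical
  rw [prod_one_add_monomial, ← Nat.cast_ofNat, ← Nat.cast_pow, ← Finset.card_powerset]
  refine pl1_sum_le_card_sub_two_of_add_eq_zero _ _ (fun v hv => ?_) (Finset.mem_powerset.mpr ht)
    (Finset.mem_powerset.mpr hu) htu (by rw [he, hsign, map_neg, neg_add_cancel])
  rw [pl1_monomial, Finset.abs_prod]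
  exact Finset.prod_le_one (fun _ _ => abs_nonneg _) fun i hi => hr i (Finset.mem_powerset.mp hv hi)

theorem single_relation_cancellation_general {I J : Type} [Fintype I] [Fintype J]
    (a : ℕ) (b : I → ℕ) (c : J → ℕ)
    (hodd : Odd (Fintype.card J))
    (hrel : a + ∑ i, b i = ∑ j, c j) :
    pl1 ((1 + X ^ a) * (∏ i, (1 + X ^ b i)) * ∏ j, (1 - X ^ c j))
      ≤ 2 ^ (1 + Fintype.card I + Fintype.card J) - 2 := by
  let e : Option I ⊕ J → ℕ := Sum.elim (fun o => o.elim a b) c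
  let r : Option I ⊕ J → ℝ := Sum.elim (fun _ => 1) (fun _ => -1)
  have hprod : (1 + X ^ a) * (∏ i, (1 + X ^ b i)) * ∏ j, (1 - X ^ c j) =
      ∏ k, (1 + monomial (e k) (r k)) := by
    simp [e, r, Fintype.prod_sum_type, Fintype.prod_option, X_pow_eq_monomial, monomial_neg,
      sub_eq_add_neg]
  have hcard :
      (Finset.univ : Finset (Option I ⊕ J)).card = 1 + Fintype.card I + Fintype.card J := by
    rw [Finset.card_univ, Fintype.card_sum, Fintype.card_option]
    ring
  rw [hprod, ← hcard]
  refine pl1_prod_one_add_monomial_le_of_cancel _ e r (by simp [r]) (t := Finset.univ.map .inl)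
    (u := Finset.univ.map .inr) (Finset.subset_univ _) (Finset.subset_univ _) ?_ ?_ ?_
  · intro h
    have hnone : (.inl none : Option I ⊕ J) ∈ Finset.univ.map .inl := by simp
    simp [h] at hnone
  · simpa [e, Fintype.sum_option] using hrel
  · simp [r, hodd.neg_one_pow]

/-- The single-relation cancellation estimate from the proof of Proposition 2.8: if
`a + ∑ b_i = ∑ c_j` with `a`, the `b_i` and the `c_j` positive and `|J|` odd (and `J`
nonempty), then `‖(1+x^a)·∏(1+x^{b_i})·∏(1−x^{c_j})‖₁ ≤ 2^{1+|I|+|J|} − 2`. -/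
theorem single_relation_cancellation {I J : Type} [Fintype I] [Fintype J] [Nonempty J]
    (a : ℕ) (ha : 0 < a) (b : I → ℕ) (hb : ∀ i, 0 < b i) (c : J → ℕ) (hc : ∀ j, 0 < c j)
    (hodd : Odd (Fintype.card J))
    (hrel : a + ∑ i, b i = ∑ j, c j) :
    pl1 ((1 + X ^ a) * (∏ i, (1 + X ^ b i)) * ∏ j, (1 - X ^ c j))
      ≤ 2 ^ (1 + Fintype.card I + Fintype.card J) - 2 :=
  single_relation_cancellation_general a b c hodd hrel
end
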